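/- Let R be a finite principal left ideal ring with respectful ordering <, B an ordered basis of R^n, and P a left multiplicative property with P(0) = true. Then the lexicode C(<, B, P) produced by the greedy algorithm is maximal with respect to inclusion among all left submodules C of R^n such that P(x) holds for all x ∈ C. -/

import Mathlib

open Classical in
/-- The submodule `V_i = R{b_1, …, b_i}` generated by the first `i` basis vectors. -/
noncomputable def Vlevel {R : Type*} [Ring R] {n : ℕ}
    (b : Module.Basis (Fin n) R (Fin n → R)) (i : ℕ) : Submodule R (Fin n → R) :=
  Submodule.span R (⇑b '' {j : Fin n | (j : ℕ) < i})

open Classical in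
/-- The level of a vector: the least `i` with `x ∈ V_i`, computed from the highest
index of a nonzero coordinate with respect to the basis `b`. -/
noncomputable def lvl {R : Type*} [Ring R] {n : ℕ}
    (b : Module.Basis (Fin n) R (Fin n → R)) (x : Fin n → R) : ℕ :=
  Finset.univ.sup fun j : Fin n => if b.repr x j ≠ 0 then (j : ℕ) + 1 else 0

/-- The lexicographic ordering on `Rⁿ` induced by a total order `L` on `R` and the
ordered basis `b`: first compare levels, then compare coefficient vectors
lexicographically from the highest index down. -/
def lexLt {R : Type*} [Ring R] {n : ℕ} (L : LinearOrder R)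
    (b : Module.Basis (Fin n) R (Fin n → R)) (x y : Fin n → R) : Prop :=
  lvl b x < lvl b y ∨
    (lvl b x = lvl b y ∧ ∃ k : Fin n, L.lt (b.repr x k) (b.repr y k) ∧
      ∀ j : Fin n, k < j → b.repr x j = b.repr y j)

/-- A total order `L` on `R` is respectful if whenever `Rx ⊋ Ry` (both nonzero),
some unit multiple `αx` of `x` precedes every unit multiple `uy` of `y`. -/
def RespectfulOrder {R : Type*} [Ring R] (L : LinearOrder R) : Prop :=
  ∀ x y : R, x ≠ 0 → y ≠ 0 → Ideal.span {y} < Ideal.span {x} →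
    ∃ α : Rˣ, ∀ u : Rˣ, L.lt ((α : R) * x) ((u : R) * y)

/-- Admissibility of a candidate vector `x` at a stage with current code `C`:
`P(γx + c)` holds for every generator `γ ∈ Γ` and every `c ∈ C`. -/
def Admissible {R : Type*} [Ring R] {n : ℕ} (P : (Fin n → R) → Bool) (Γ : Set R)
    (C : Submodule R (Fin n → R)) (x : Fin n → R) : Prop :=
  ∀ γ ∈ Γ, ∀ c ∈ C, P (γ • x + c) = true

/-- A run of the greedy lexicode algorithm: `C 0 = 0`, and at each step
`i = 1, …, n` either the lexicographically smallest admissible vector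
`a i ∈ V_i \ V_{i-1}` is selected and `C i = R·(a i) + C (i-1)`, or no vector of
`V_i \ V_{i-1}` is admissible and `C i = C (i-1)`. -/
def GreedyRun {R : Type*} [Ring R] {n : ℕ} (L : LinearOrder R)
    (b : Module.Basis (Fin n) R (Fin n → R)) (P : (Fin n → R) → Bool) (Γ : Set R)
    (C : ℕ → Submodule R (Fin n → R)) (a : ℕ → (Fin n → R)) (sel : ℕ → Prop) : Prop :=
  C 0 = ⊥ ∧
  ∀ i : ℕ, 1 ≤ i → i ≤ n →
    ((sel i ∧ a i ∈ Vlevel b i ∧ a i ∉ Vlevel b (i - 1) ∧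
        Admissible P Γ (C (i - 1)) (a i) ∧
        (∀ x, x ∈ Vlevel b i → x ∉ Vlevel b (i - 1) →
          Admissible P Γ (C (i - 1)) x → x = a i ∨ lexLt L b (a i) x) ∧
        C i = Submodule.span R {a i} ⊔ C (i - 1))
      ∨ (¬ sel i ∧
          (∀ x, x ∈ Vlevel b i → x ∉ Vlevel b (i - 1) →
            ¬ Admissible P Γ (C (i - 1)) x) ∧
          C i = C (i - 1)))


/-!
Suppose `D ⊋ C n` is a submodule on which `P` holds, and take `x ∈ D \ C n` of least level
`k + 1`. Every element of `D` is admissible over `C k ≤ D`, so step `k + 1` selected a vector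
`a ∈ C n ≤ D`, and no vector of `D` of level `k + 1` precedes `a`. If the leading coefficient
`β` of `x` were not in `R α`, where `α` is that of `a`, a generator `δ = p α + q β` of
`R α + R β` would span an ideal strictly larger than `R α`; respectfulness gives a unit `ε`
with `ε δ < α`, and `ε • (p • a + q • x) ∈ D` would precede `a`. Hence `β = r α`, and
`x - r • a ∈ D \ C n` has smaller level.
-/

section Level

variable {R : Type*} [Ring R] {n : ℕ} (b : Module.Basis (Fin n) R (Fin n → R))

theorem lvl_le_iff {x : Fin n → R} {i : ℕ} :
    lvl b x ≤ i ↔ ∀ j : Fin n, i ≤ (j : ℕ) → b.repr x j = 0 := by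
  simp only [lvl, Finset.sup_le_iff, Finset.mem_univ, true_implies]
  refine forall_congr' fun j => ?_
  by_cases h : b.repr x j = 0 <;> simp [h]

theorem mem_Vlevel_iff_lvl_le {x : Fin n → R} {i : ℕ} : x ∈ Vlevel b i ↔ lvl b x ≤ i := by
  rw [lvl_le_iff, Vlevel, Module.Basis.mem_span_image]
  simp only [Set.subset_def, Finset.mem_coe, Finsupp.mem_support_iff, Set.mem_ofPred_eq]
  exact forall_congr' fun j => by rw [not_imp_comm, not_lt]

theorem lvl_eq_succ_iff {x : Fin n → R} {i : ℕ} :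
    lvl b x = i + 1 ↔ x ∈ Vlevel b (i + 1) ∧ x ∉ Vlevel b i := by
  simp only [mem_Vlevel_iff_lvl_le]
  omega

theorem repr_eq_zero_of_lvl_le {x : Fin n → R} {j : Fin n} (h : lvl b x ≤ j) :
    b.repr x j = 0 :=
  (lvl_le_iff b).1 h j le_rfl

theorem repr_ne_zero_of_lvl_eq {x : Fin n → R} {k : Fin n} (h : lvl b x = k + 1) :
    b.repr x k ≠ 0 := by
  intro h0
  have : lvl b x ≤ k := (lvl_le_iff b).2 fun j hj => by
    rcases hj.eq_or_lt with hjk | hjk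
    · rwa [← Fin.ext hjk]
    · exact repr_eq_zero_of_lvl_le b (by omega)
  omega

theorem lvl_eq_succ_of_repr_ne_zero {x : Fin n → R} {k : Fin n} (h : lvl b x ≤ k + 1)
    (hk : b.repr x k ≠ 0) : lvl b x = k + 1 :=
  le_antisymm h (Nat.succ_le_of_lt (lt_of_not_ge fun h' => hk (repr_eq_zero_of_lvl_le b h')))

theorem exists_lvl_eq_succ {x : Fin n → R} (hx : x ≠ 0) : ∃ k : Fin n, lvl b x = k + 1 := by
  have hle : lvl b x ≤ n := (lvl_le_iff b).2 fun j hj => absurd j.isLt (by omega)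
  have hne : lvl b x ≠ 0 := fun h => hx <| b.repr.map_eq_zero_iff.1 <|
    Finsupp.ext fun j => (lvl_le_iff b).1 h.le j (Nat.zero_le _)
  exact ⟨⟨lvl b x - 1, by omega⟩, by simp only; omega⟩

theorem lvl_sub_smul_le {x a : Fin n → R} {k : Fin n} {r : R} (hx : lvl b x ≤ k + 1)
    (ha : lvl b a ≤ k + 1) (hr : b.repr x k = r * b.repr a k) : lvl b (x - r • a) ≤ k := by
  refine (lvl_le_iff b).2 fun j hj => ?_
  simp only [map_sub, map_smul, Finsupp.sub_apply, Finsupp.smul_apply, smul_eq_mul]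
  rcases hj.eq_or_lt with hjk | hjk
  · rw [← Fin.ext hjk, hr, sub_self]
  · rw [repr_eq_zero_of_lvl_le b (x := x) (by omega),
      repr_eq_zero_of_lvl_le b (x := a) (by omega), mul_zero, sub_zero]

theorem lexLt_asymm (L : LinearOrder R) {x y : Fin n → R} (hxy : lexLt L b x y) :
    ¬ lexLt L b y x := by
  let := L
  rintro (hyx | ⟨hyx, k₂, hk₂, hy₂⟩) <;> rcases hxy with hxy | ⟨hxy, k₁, hk₁, hx₁⟩
  all_goals try omega
  rcases lt_trichotomy k₁ k₂ with h | rfl | h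
  · exact (hx₁ k₂ h ▸ hk₂).false
  · exact lt_asymm hk₁ hk₂
  · exact (hy₂ k₁ h ▸ hk₁).false

theorem lexLt_of_repr_lt (L : LinearOrder R) {x y : Fin n → R} {k : Fin n}
    (hx : lvl b x = k + 1) (hy : lvl b y = k + 1) (h : L.lt (b.repr x k) (b.repr y k)) :
    lexLt L b x y :=
  Or.inr ⟨hx.trans hy.symm, k, h, fun j hj => by
    have hkj : (k : ℕ) < j := hj
    rw [repr_eq_zero_of_lvl_le b (x := x) (by omega),
      repr_eq_zero_of_lvl_le b (x := y) (by omega)]⟩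

theorem repr_mem_span_singleton_of_lexMin (hPLIR : ∀ I : Ideal R, ∃ g : R, I = Ideal.span {g})
    {L : LinearOrder R} (hL : RespectfulOrder L) {D : Submodule R (Fin n → R)}
    {a x : Fin n → R} {k : Fin n} (haD : a ∈ D) (ha : lvl b a = k + 1) (hxD : x ∈ D)
    (hx : lvl b x ≤ k + 1) (hmin : ∀ w ∈ D, lvl b w = k + 1 → ¬ lexLt L b w a) :
    b.repr x k ∈ Ideal.span {b.repr a k} := by
  set α := b.repr a k
  set β := b.repr x k
  by_contra hβ
  have hα : α ≠ 0 := repr_ne_zero_of_lvl_eq b ha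
  obtain ⟨δ, hδ⟩ := hPLIR (Ideal.span {α, β})
  obtain ⟨p, q, hpq⟩ := Submodule.mem_span_pair.1 (hδ ▸ Ideal.mem_span_singleton_self δ)
  have hlt : Ideal.span {α} < Ideal.span {δ} := hδ ▸
    lt_of_le_of_ne (Ideal.span_mono (by simp)) fun h => hβ (h ▸ Ideal.subset_span (by simp))
  have hδ0 : δ ≠ 0 := by
    rintro rfl
    simp at hlt
  obtain ⟨ε, hε⟩ := hL δ α hδ0 hα hlt
  set w := (ε : R) • (p • a + q • x)
  have hw : b.repr w k = ε * δ := by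
    simp only [w, ← hpq, map_smul, map_add, Finsupp.smul_apply, Finsupp.add_apply, smul_eq_mul,
      α, β]
  have hwD : w ∈ D := D.smul_mem _ (D.add_mem (D.smul_mem p haD) (D.smul_mem q hxD))
  have hwV : w ∈ Vlevel b (k + 1) := by
    have hV := fun {y} (hy : lvl b y ≤ k + 1) => (mem_Vlevel_iff_lvl_le b).2 hy
    exact Submodule.smul_mem _ _ (add_mem (Submodule.smul_mem _ p (hV ha.le))
      (Submodule.smul_mem _ q (hV hx)))
  have hwlvl : lvl b w = k + 1 := lvl_eq_succ_of_repr_ne_zero b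
    ((mem_Vlevel_iff_lvl_le b).1 hwV) (hw ▸ (Units.mul_right_eq_zero ε).not.2 hδ0)
  exact hmin w hwD hwlvl (lexLt_of_repr_lt b L hwlvl ha (by simpa [hw] using hε 1))

end Level

namespace GreedyRun

variable {R : Type*} [Ring R] {n : ℕ} {L : LinearOrder R}
  {b : Module.Basis (Fin n) R (Fin n → R)} {P : (Fin n → R) → Bool} {Γ : Set R}
  {C : ℕ → Submodule R (Fin n → R)} {a : ℕ → (Fin n → R)} {sel : ℕ → Prop}

theorem le_succ (hrun : GreedyRun L b P Γ C a sel) {m : ℕ} (hm : m < n) :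
    C m ≤ C (m + 1) := by
  rcases hrun.2 (m + 1) (by omega) hm with ⟨-, -, -, -, -, hC⟩ | ⟨-, -, hC⟩ <;>
    simp only [hC, Nat.add_sub_cancel, le_sup_right, le_rfl]

theorem mono (hrun : GreedyRun L b P Γ C a sel) {j k : ℕ} (hjk : j ≤ k) (hk : k ≤ n) :
    C j ≤ C k := by
  induction hjk with
  | refl => exact le_rfl
  | step _ ih => exact (ih (by omega)).trans (hrun.le_succ (by omega))

theorem exists_lexMin (hrun : GreedyRun L b P Γ C a sel) {D : Submodule R (Fin n → R)}
    (hD : ∀ x ∈ D, P x = true) (hCD : C n ≤ D) {x : Fin n → R} (hxD : x ∈ D) {k : Fin n}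
    (hx : lvl b x = k + 1) :
    ∃ v ∈ C n, lvl b v = k + 1 ∧ ∀ w ∈ D, lvl b w = k + 1 → ¬ lexLt L b w v := by
  have hadm : ∀ z ∈ D, Admissible P Γ (C k) z := fun z hz γ _ c hc =>
    hD _ (D.add_mem (D.smul_mem γ hz) (hCD (hrun.mono k.isLt.le le_rfl hc)))
  rcases hrun.2 (k + 1) (by omega) k.isLt with ⟨-, haV, haV', -, hmin, hC⟩ | ⟨-, hnone, -⟩
  · simp only [Nat.add_sub_cancel] at haV' hmin hC
    refine ⟨a (k + 1), hrun.mono k.isLt le_rfl ?_, (lvl_eq_succ_iff b).2 ⟨haV, haV'⟩,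
      fun w hwD hw hlt => ?_⟩
    · rw [hC]
      exact Submodule.mem_sup_left (Submodule.mem_span_singleton_self _)
    obtain ⟨hwV, hwV'⟩ := (lvl_eq_succ_iff b).1 hw
    rcases hmin w hwV hwV' (hadm w hwD) with rfl | hgt
    · exact lexLt_asymm b L hlt hlt
    · exact lexLt_asymm b L hlt hgt
  · obtain ⟨hxV, hxV'⟩ := (lvl_eq_succ_iff b).1 hx
    exact (hnone x hxV (by simpa using hxV') (hadm x hxD)).elim

end GreedyRun

theorem greedy_lexicode_maximal {R : Type*} [Ring R] {n : ℕ}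
    (hPLIR : ∀ I : Ideal R, ∃ g : R, I = Ideal.span {g})
    (L : LinearOrder R) (hL : RespectfulOrder L)
    (b : Module.Basis (Fin n) R (Fin n → R))
    (P : (Fin n → R) → Bool)
    (Γ : Set R)
    (C : ℕ → Submodule R (Fin n → R)) (a : ℕ → (Fin n → R)) (sel : ℕ → Prop)
    (hrun : GreedyRun L b P Γ C a sel) :
    ∀ D : Submodule R (Fin n → R), (∀ x ∈ D, P x = true) → C n ≤ D → D = C n := by
  intro D hD hCD
  refine le_antisymm ?_ hCD
  by_contra hne
  obtain ⟨x, ⟨hxD, hxC⟩, hmin⟩ := (InvImage.wf (lvl b) wellFounded_lt).has_min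
    {x | x ∈ D ∧ x ∉ C n} (SetLike.not_le_iff_exists.1 hne)
  obtain ⟨k, hk⟩ := exists_lvl_eq_succ b fun (h : x = 0) => hxC (h ▸ (C n).zero_mem)
  obtain ⟨v, hvC, hv, hv_min⟩ := hrun.exists_lexMin hD hCD hxD hk
  obtain ⟨r, hr⟩ := Ideal.mem_span_singleton'.1 <|
    repr_mem_span_singleton_of_lexMin b hPLIR hL (hCD hvC) hv hxD hk.le hv_min
  refine hmin (x - r • v) ⟨D.sub_mem hxD (D.smul_mem r (hCD hvC)), fun h => hxC ?_⟩ ?_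
  · simpa using (C n).add_mem h ((C n).smul_mem r hvC)
  · have := lvl_sub_smul_le b hk.le hv.le hr.symm
    show lvl b _ < lvl b x
    omega
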